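/- arXiv:2207.13014 — 2 statements merged into one kernel-verified Lean document; each statement's English description precedes it below -/
import Mathlib

section
/- If the C^0 continuity constraints hold, then for every t ∈ [c_0, c_J), β(t) = γ_{1,0} + Σ_{j=1}^{J} Σ_{d=1}^{D} γ_{j,d} · ( min{ max(0, t − c_{j−1}), c_j − c_{j−1} } )^d. -/
/-!
Let `t` lie in block `k`. Since the edges increase, the clipped increment of block `j` at `t` is
the full length `c j - c (j - 1)` for `j < k`, `t - c (k - 1)` for `j = k` and `0` for `j > k`.
So the right-hand side is `γ 1 0`, plus the non-constant parts of the first `k - 1` local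
polynomials at their right ends, plus the non-constant part of the `k`-th one at `t`; and by the
continuity constraints, which telescope, the first two summands add up to `γ k 0`.
-/

open Finset

namespace PiecewisePoly

lemma sum_Icc_one_eq_sum_range {M : Type*} [AddCommMonoid M] (f : ℕ → M) (n : ℕ) :
    ∑ j ∈ Icc 1 n, f j = ∑ i ∈ range n, f (i + 1) := by
  rw [← Ico_add_one_right_eq_Icc, sum_Ico_eq_sum_range, Nat.add_sub_cancel]
  simp only [add_comm]

lemma sum_range_succ_eq_add_sum_Icc {M : Type*} [AddCommMonoid M] (f : ℕ → M) (n : ℕ) :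
    ∑ d ∈ range (n + 1), f d = f 0 + ∑ d ∈ Icc 1 n, f d := by
  rw [sum_range_succ', sum_Icc_one_eq_sum_range, add_comm]

lemma exists_mem_Ico_of_le_of_lt {α : Type*} [LinearOrder α] {c : ℕ → α} {J : ℕ} {t : α}
    (h0 : c 0 ≤ t) (hJ : t < c J) :
    ∃ k < J, t ∈ Set.Ico (c k) (c (k + 1)) := by
  classical
  have hex : ∃ n, t < c n := ⟨J, hJ⟩
  obtain ⟨k, hk⟩ : ∃ k, Nat.find hex = k + 1 :=
    Nat.exists_eq_add_one.mpr <| Nat.pos_of_ne_zero fun h ↦ (Nat.find_spec hex).not_ge (h ▸ h0)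
  refine ⟨k, ?_, not_lt.mp (Nat.find_min hex (by omega)), hk ▸ Nat.find_spec hex⟩
  have := Nat.find_min' hex hJ
  omega

def ramp (a b t : ℝ) : ℝ := min (max 0 (t - a)) (b - a)

lemma ramp_of_le_left {a b t : ℝ} (ht : t ≤ a) (hab : a ≤ b) : ramp a b t = 0 := by
  rw [ramp, max_eq_left (by linarith), min_eq_left (by linarith)]

lemma ramp_of_right_le {a b t : ℝ} (ht : b ≤ t) : ramp a b t = b - a :=
  min_eq_right ((sub_le_sub_right ht a).trans (le_max_right _ _))

lemma ramp_of_mem_Icc {a b t : ℝ} (ht : t ∈ Set.Icc a b) : ramp a b t = t - a := by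
  rw [ramp, max_eq_right (by linarith [ht.1]), min_eq_left (by linarith [ht.2])]

lemma sum_ramp_of_mem_Ico {M : Type*} [AddCommMonoid M] {c : ℕ → ℝ} {J k : ℕ}
    (hc : MonotoneOn c (Set.Iic J)) (hk : k < J) {t : ℝ} (ht : t ∈ Set.Ico (c k) (c (k + 1)))
    (P : ℕ → ℝ → M) (hP : ∀ i, P i 0 = 0) :
    ∑ i ∈ range J, P i (ramp (c i) (c (i + 1)) t)
      = ∑ i ∈ range k, P i (c (i + 1) - c i) + P k (t - c k) := by
  have hle : ∀ {i j}, i ≤ j → j ≤ J → c i ≤ c j := fun hij hj ↦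
    hc (Set.mem_Iic.mpr (hij.trans hj)) (Set.mem_Iic.mpr hj) hij
  have hbefore : ∀ i ∈ range k, P i (ramp (c i) (c (i + 1)) t) = P i (c (i + 1) - c i) :=
    fun i hi ↦ by rw [ramp_of_right_le ((hle (mem_range.mp hi) hk.le).trans ht.1)]
  have hafter : ∀ i ∈ Ico (k + 1) J, P i (ramp (c i) (c (i + 1)) t) = 0 := fun i hi ↦ by
    obtain ⟨hki, hiJ⟩ := mem_Ico.mp hi
    rw [ramp_of_le_left (ht.2.le.trans (hle hki hiJ.le)) (hle i.le_succ hiJ), hP]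
  rw [← sum_range_add_sum_Ico _ hk, sum_range_succ, sum_congr rfl hbefore, sum_eq_zero hafter,
    ramp_of_mem_Icc (Set.Ico_subset_Icc_self ht), add_zero]

lemma const_coeff_eq_of_continuity {c : ℕ → ℝ} {γ : ℕ → ℕ → ℝ} {D k : ℕ}
    (hcont : ∀ i < k,
      γ (i + 2) 0 = ∑ d ∈ range (D + 1), γ (i + 1) d * (c (i + 1) - c i) ^ d) :
    γ (k + 1) 0
      = γ 1 0 + ∑ i ∈ range k, ∑ d ∈ Icc 1 D, γ (i + 1) d * (c (i + 1) - c i) ^ d := by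
  rw [eq_sum_range_sub (fun i ↦ γ (i + 1) 0)]
  refine congrArg _ (sum_congr rfl fun i hi ↦ ?_)
  rw [hcont i (mem_range.mp hi), sum_range_succ_eq_add_sum_Icc]
  simp

end PiecewisePoly

open PiecewisePoly in
theorem piecewise_poly_global_representation_general
    (J D : ℕ) (c : ℕ → ℝ)
    (hc : ∀ j, j < J → c j < c (j + 1))
    (γ : ℕ → ℕ → ℝ) (β : ℝ → ℝ)
    (hβ : ∀ j, 1 ≤ j → j ≤ J → ∀ t : ℝ, c (j - 1) ≤ t → t < c j →
      β t = ∑ d ∈ Finset.range (D + 1), γ j d * (t - c (j - 1)) ^ d)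
    (hcont : ∀ j, 1 ≤ j → j ≤ J - 1 →
      γ (j + 1) 0 = ∑ d ∈ Finset.range (D + 1), γ j d * (c j - c (j - 1)) ^ d) :
    ∀ t : ℝ, c 0 ≤ t → t < c J →
      β t = γ 1 0 + ∑ j ∈ Finset.Icc 1 J, ∑ d ∈ Finset.Icc 1 D,
        γ j d * (min (max 0 (t - c (j - 1))) (c j - c (j - 1))) ^ d := by
  intro t ht0 htJ
  obtain ⟨k, hkJ, hk⟩ := exists_mem_Ico_of_le_of_lt ht0 htJ
  have hγ : γ (k + 1) 0 = γ 1 0 + ∑ i ∈ range k, ∑ d ∈ Icc 1 D,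
      γ (i + 1) d * (c (i + 1) - c i) ^ d :=
    const_coeff_eq_of_continuity fun i hi ↦ by simpa using hcont (i + 1) (by omega) (by omega)
  have hsum := sum_ramp_of_mem_Ico (strictMonoOn_Iic_of_lt_succ hc).monotoneOn hkJ hk
    (fun i x ↦ ∑ d ∈ Icc 1 D, γ (i + 1) d * x ^ d)
    fun i ↦ sum_eq_zero fun d hd ↦ by
      rw [zero_pow (Nat.one_le_iff_ne_zero.mp (mem_Icc.mp hd).1), mul_zero]
  rw [hβ (k + 1) (by omega) (by omega) t (by simpa using hk.1) (by simpa using hk.2),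
    sum_range_succ_eq_add_sum_Icc, sum_Icc_one_eq_sum_range _ J, pow_zero, mul_one, hγ, add_assoc]
  simp only [Nat.add_sub_cancel]
  exact congrArg (γ 1 0 + ·) hsum.symm

/-- If the C⁰ continuity constraints hold, then on `[c 0, c J)` the piecewise
polynomial `β` has the single global representation
`β(t) = γ₁₀ + Σ_{j=1}^{J} Σ_{d=1}^{D} γ_{j,d} (min(max(0, t − c_{j−1}), c_j − c_{j−1}))^d`. -/
theorem piecewise_poly_global_representation
    (J D : ℕ) (hJ : 1 ≤ J) (c : ℕ → ℝ)
    (hc : ∀ j, j < J → c j < c (j + 1))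
    (γ : ℕ → ℕ → ℝ) (β : ℝ → ℝ)
    (hβ : ∀ j, 1 ≤ j → j ≤ J → ∀ t : ℝ, c (j - 1) ≤ t → t < c j →
      β t = ∑ d ∈ Finset.range (D + 1), γ j d * (t - c (j - 1)) ^ d)
    (hcont : ∀ j, 1 ≤ j → j ≤ J - 1 →
      γ (j + 1) 0 = ∑ d ∈ Finset.range (D + 1), γ j d * (c j - c (j - 1)) ^ d) :
    ∀ t : ℝ, c 0 ≤ t → t < c J →
      β t = γ 1 0 + ∑ j ∈ Finset.Icc 1 J, ∑ d ∈ Finset.Icc 1 D,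
        γ j d * (min (max 0 (t - c (j - 1))) (c j - c (j - 1))) ^ d :=
  piecewise_poly_global_representation_general J D c hc γ β hβ hcont
end

section
/- Suppose J ≥ 2 and the blocks have equal width Δ > 0, i.e., c_j = c_0 + jΔ for j = 0,…,J. Then β(t + Δ) = β(t) for all t ∈ [c_0, c_{J−1}) if and only if γ_{j,d} = γ_{1,d} for all j = 1,…,J and d = 0,…,D. (Thus assuming homogeneous basis-approximation coefficients across all blocks is equivalent to assuming β is cyclical with period equal to the block length.) -/
/-!
Reparametrise block `j + 1` by the offset `x = t - c_j ∈ [0, Δ)`. Since the blocks have equal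
width, `t ↦ t + Δ` maps block `j + 1` onto block `j + 2` with the same offset, so periodicity says
exactly that consecutive blocks carry the same polynomial in `x` on `[0, Δ)`. A polynomial
identity on an infinite set is an identity of coefficients, and equality of consecutive
coefficient vectors is equality with the first one.
-/

open Finset Polynomial

theorem sum_range_mul_pow_eqOn_iff {R : Type*} [CommRing R] [IsDomain R] {s : Set R}
    (hs : s.Infinite) (n : ℕ) (a b : ℕ → R) :
    (∀ x ∈ s, ∑ d ∈ range n, a d * x ^ d = ∑ d ∈ range n, b d * x ^ d) ↔ ∀ d < n, a d = b d := by
  refine ⟨fun h => ?_, fun h x _ => sum_congr rfl fun d hd => by rw [h d (mem_range.1 hd)]⟩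
  let p : (ℕ → R) → R[X] := fun a => ∑ d ∈ range n, C (a d) * X ^ d
  have eval_p (a : ℕ → R) (x : R) : (p a).eval x = ∑ d ∈ range n, a d * x ^ d := by
    simp [p, eval_finsetSum]
  have coeff_p (a : ℕ → R) {d : ℕ} (hd : d < n) : (p a).coeff d = a d := by
    simp [p, hd]
  have hpq : p a = p b := eq_of_infinite_eval_eq _ _ <|
    hs.mono fun x hx => by simp only [Set.mem_ofPred_eq, eval_p, h x hx]
  intro d hd
  rw [← coeff_p a hd, ← coeff_p b hd, hpq]

theorem forall_eq_one_iff_forall_succ_eq {α : Type*} (g : ℕ → α) (J : ℕ) :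
    (∀ j, 1 ≤ j → j ≤ J → g j = g 1) ↔ ∀ j, j + 2 ≤ J → g (j + 2) = g (j + 1) := by
  refine ⟨fun h j hj => (h _ (by omega) hj).trans (h _ (by omega) (by omega)).symm,
    fun h j hj1 => ?_⟩
  induction j, hj1 using Nat.le_induction with
  | base => exact fun _ => rfl
  | succ k hk ih =>
    intro hkJ
    obtain ⟨i, rfl⟩ := Nat.exists_eq_add_of_le' hk
    exact (h i hkJ).trans (ih (by omega))

theorem exists_add_nat_mul_add_of_mem_Ico {Δ a t : ℝ} (hΔ : 0 < Δ) {n : ℕ}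
    (ht : t ∈ Set.Ico a (a + n * Δ)) : ∃ j < n, ∃ x ∈ Set.Ico 0 Δ, t = a + j * Δ + x := by
  obtain ⟨hat, htn⟩ := ht
  have hq : 0 ≤ (t - a) / Δ := div_nonneg (by linarith) hΔ.le
  set j := ⌊(t - a) / Δ⌋₊
  have hjle : (j : ℝ) * Δ ≤ t - a := (le_div_iff₀ hΔ).1 (Nat.floor_le hq)
  have hjlt : t - a < (j + 1) * Δ := (div_lt_iff₀ hΔ).1 (Nat.lt_floor_add_one _)
  exact ⟨j, (Nat.floor_lt hq).2 ((div_lt_iff₀ hΔ).2 (by linarith)), t - a - j * Δ,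
    ⟨by linarith, by linarith⟩, by ring⟩

theorem forall_add_eq_iff_forall_blocks {f : ℝ → ℝ} {Δ : ℝ} (hΔ : 0 < Δ) (a : ℝ) (n : ℕ) :
    (∀ t, a ≤ t → t < a + n * Δ → f (t + Δ) = f t) ↔
      ∀ j < n, ∀ x ∈ Set.Ico 0 Δ, f (a + (j + 1 : ℕ) * Δ + x) = f (a + j * Δ + x) := by
  constructor
  · rintro h j hj x ⟨hx0, hxΔ⟩
    have hjn : (j : ℝ) + 1 ≤ n := by exact_mod_cast hj
    have := h (a + j * Δ + x) (by nlinarith) (by nlinarith)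
    rw [← this]
    congr 1
    push_cast
    ring
  · intro h t hat htn
    obtain ⟨j, hj, x, hx, rfl⟩ := exists_add_nat_mul_add_of_mem_Ico hΔ ⟨hat, htn⟩
    rw [← h j hj x hx]
    congr 1
    push_cast
    ring

theorem piecewise_poly_periodic_iff_homogeneous_general
    (J D : ℕ) (Δ : ℝ) (hΔ : 0 < Δ) (c : ℕ → ℝ)
    (hcΔ : ∀ j, j ≤ J → c j = c 0 + (j : ℝ) * Δ)
    (γ : ℕ → ℕ → ℝ) (β : ℝ → ℝ)
    (hβ : ∀ j, 1 ≤ j → j ≤ J → ∀ t : ℝ, c (j - 1) ≤ t → t < c j →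
      β t = ∑ d ∈ Finset.range (D + 1), γ j d * (t - c (j - 1)) ^ d) :
    (∀ t : ℝ, c 0 ≤ t → t < c (J - 1) → β (t + Δ) = β t) ↔
      (∀ j, 1 ≤ j → j ≤ J → ∀ d, d ≤ D → γ j d = γ 1 d) := by
  have hblock : ∀ j < J, ∀ x ∈ Set.Ico 0 Δ,
      β (c 0 + j * Δ + x) = ∑ d ∈ range (D + 1), γ (j + 1) d * x ^ d := by
    rintro j hj x ⟨hx0, hxΔ⟩
    have hcj := hcΔ j hj.le
    have hcj1 := hcΔ (j + 1) hj
    push_cast at hcj1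
    rw [hβ (j + 1) (by omega) hj _ (by rw [Nat.add_sub_cancel]; linarith) (by linarith)]
    simp [hcj]
  rw [hcΔ (J - 1) (J.sub_le 1), forall_add_eq_iff_forall_blocks hΔ]
  calc (∀ j < J - 1, ∀ x ∈ Set.Ico 0 Δ,
          β (c 0 + (j + 1 : ℕ) * Δ + x) = β (c 0 + j * Δ + x))
      ↔ ∀ j, j + 2 ≤ J → ∀ x ∈ Set.Ico 0 Δ,
          ∑ d ∈ range (D + 1), γ (j + 2) d * x ^ d = ∑ d ∈ range (D + 1), γ (j + 1) d * x ^ d := by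
        refine forall_congr' fun j => ?_
        rw [show j < J - 1 ↔ j + 2 ≤ J by omega]
        refine imp_congr_right fun hj => forall₂_congr fun x hx => ?_
        rw [hblock (j + 1) (by omega) x hx, hblock j (by omega) x hx]
    _ ↔ ∀ j, j + 2 ≤ J → ∀ d, d ≤ D → γ (j + 2) d = γ (j + 1) d := by
        simp only [sum_range_mul_pow_eqOn_iff (Set.Ico_infinite hΔ), Nat.lt_succ_iff]
    _ ↔ ∀ d, d ≤ D → ∀ j, j + 2 ≤ J → γ (j + 2) d = γ (j + 1) d := by grind
    _ ↔ ∀ d, d ≤ D → ∀ j, 1 ≤ j → j ≤ J → γ j d = γ 1 d := by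
        simp only [forall_eq_one_iff_forall_succ_eq (γ · _)]
    _ ↔ _ := by grind

/-- With `J ≥ 2` equal-width blocks of width `Δ > 0` (so `c_j = c_0 + jΔ`),
the piecewise polynomial `β` satisfies `β(t + Δ) = β(t)` for all
`t ∈ [c_0, c_{J−1})` if and only if the block coefficients are homogeneous:
`γ_{j,d} = γ_{1,d}` for all `j = 1,…,J` and `d = 0,…,D`. -/
theorem piecewise_poly_periodic_iff_homogeneous
    (J D : ℕ) (hJ : 2 ≤ J) (Δ : ℝ) (hΔ : 0 < Δ) (c : ℕ → ℝ)
    (hcΔ : ∀ j, j ≤ J → c j = c 0 + (j : ℝ) * Δ)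
    (γ : ℕ → ℕ → ℝ) (β : ℝ → ℝ)
    (hβ : ∀ j, 1 ≤ j → j ≤ J → ∀ t : ℝ, c (j - 1) ≤ t → t < c j →
      β t = ∑ d ∈ Finset.range (D + 1), γ j d * (t - c (j - 1)) ^ d) :
    (∀ t : ℝ, c 0 ≤ t → t < c (J - 1) → β (t + Δ) = β t) ↔
      (∀ j, 1 ≤ j → j ≤ J → ∀ d, d ≤ D → γ j d = γ 1 d) :=
  piecewise_poly_periodic_iff_homogeneous_general J D Δ hΔ c hcΔ γ β hβ
end
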